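/- arXiv:2505.00446 — 3 statements merged into one kernel-verified Lean document; each statement's English description precedes it below -/
import Mathlib

section
/- There exists a constant Q > 0 such that the perturbation term g̃(t) = k(t) - t^{-α₀}/Γ(1-α₀) satisfies |g̃(t)| ≤ Q t^{1-α₀}(1 + |ln t|) for all t ∈ (0,T]. -/
/-!
Write `k(t) = t^{-α(t)} G(α(t))` with `G(a) = 1/Γ(1-a)`. Since `1/Γ` is entire, `G ∘ α` is `C¹`,
so it moves by `O(t)` on `[0,T]`. Moreover `t^{-α(t)} = t^{-α₀} exp x` with
`x = (α₀ - α(t)) log t = O(t |log t|)`, which stays bounded on `(0,T]`; hence `|exp x - 1| = O(|x|)`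
and both contributions are `O(t^{1-α₀}(1 + |log t|))`.
-/

open Set Real

theorem Real.abs_exp_sub_one_le_abs_mul_exp_abs (x : ℝ) : |exp x - 1| ≤ |x| * exp |x| := by
  rcases le_total 0 x with hx | hx
  · have h : 1 - x ≤ (exp x)⁻¹ := by linarith [exp_neg x ▸ add_one_le_exp (-x)]
    rw [abs_of_nonneg hx, abs_of_nonneg (sub_nonneg.2 (one_le_exp hx))]
    nlinarith [exp_pos x, mul_inv_cancel₀ (exp_pos x).ne']
  · rw [abs_of_nonpos hx, abs_of_nonpos (sub_nonpos.2 (exp_le_one_iff.2 hx))]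
    nlinarith [add_one_le_exp x, one_le_exp (neg_nonneg.2 hx)]

theorem Real.abs_rpow_mul_sub_rpow_mul_le {t : ℝ} (ht : 0 < t) (a b u v : ℝ) :
    |t ^ a * u - t ^ b * v| ≤
      t ^ b * exp |log t * (a - b)| * (|u - v| + |log t * (a - b)| * |v|) := by
  set x := log t * (a - b) with hx
  have hta : t ^ a = t ^ b * exp x := by
    rw [rpow_def_of_pos ht, rpow_def_of_pos ht, ← exp_add, hx]; ring_nf
  have hsplit : t ^ a * u - t ^ b * v = t ^ b * (exp x * (u - v) + (exp x - 1) * v) := by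
    rw [hta]; ring
  rw [hsplit, abs_mul, abs_of_pos (rpow_pos_of_pos ht b), mul_assoc]
  gcongr
  calc |exp x * (u - v) + (exp x - 1) * v| ≤ exp x * |u - v| + |exp x - 1| * |v| := by
        simpa only [abs_mul, abs_of_pos (exp_pos x)] using
          abs_add_le (exp x * (u - v)) ((exp x - 1) * v)
    _ ≤ exp |x| * |u - v| + |x| * exp |x| * |v| := by
        gcongr
        · exact le_abs_self x
        · exact abs_exp_sub_one_le_abs_mul_exp_abs x
    _ = exp |x| * (|u - v| + |x| * |v|) := by ring

theorem ContDiff.exists_norm_sub_le_mul {F : Type*} [NormedAddCommGroup F] [NormedSpace ℝ F]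
    {f : ℝ → F} (hf : ContDiff ℝ 1 f) (T : ℝ) :
    ∃ L, 0 ≤ L ∧ ∀ t ∈ Icc 0 T, ‖f t - f 0‖ ≤ L * t := by
  obtain ⟨K, hK⟩ :=
    hf.locallyLipschitz.locallyLipschitzOn.exists_lipschitzOnWith_of_compact
      (isCompact_Icc (a := 0) (b := T))
  refine ⟨K, K.2, fun t ht => ?_⟩
  simpa [← dist_eq_norm, Real.dist_eq, abs_of_nonneg ht.1] using
    hK.dist_le_mul t ht 0 ⟨le_rfl, ht.1.trans ht.2⟩

theorem Real.contDiff_inv_Gamma {n : WithTop ℕ∞} : ContDiff ℝ n fun x : ℝ => (Gamma x)⁻¹ := by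
  have hC : ContDiff ℂ n fun s : ℂ => (Complex.Gamma s)⁻¹ :=
    Complex.differentiable_one_div_Gamma.contDiff
  convert Complex.reCLM.contDiff.comp ((hC.restrict_scalars ℝ).comp Complex.ofRealCLM.contDiff)
    using 2 with x
  simp [Complex.Gamma_ofReal, ← Complex.ofReal_inv]

theorem Real.abs_rpow_neg_mul_sub_rpow_neg_mul_le {t a b u v L M B : ℝ} (ht : 0 < t)
    (hab : |a - b| ≤ L * t) (huv : |u - v| ≤ M * t) (hB : t * |log t| ≤ B) :
    |t ^ (-a) * u - t ^ (-b) * v| ≤ exp (L * B) * (M + L * |v|) * t ^ (1 - b) * (1 + |log t|) := by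
  have hL : 0 ≤ L := (mul_nonneg_iff_of_pos_right ht).1 ((abs_nonneg _).trans hab)
  have hM : 0 ≤ M := (mul_nonneg_iff_of_pos_right ht).1 ((abs_nonneg _).trans huv)
  set x := log t * (-a - -b)
  have hx : |x| ≤ L * (t * |log t|) := by
    calc |x| = |log t| * |a - b| := by rw [abs_mul, ← abs_neg (a - b)]; ring_nf
      _ ≤ |log t| * (L * t) := by gcongr
      _ = L * (t * |log t|) := by ring
  have hxB : exp |x| ≤ exp (L * B) := exp_le_exp.2 (hx.trans (by gcongr))
  calc |t ^ (-a) * u - t ^ (-b) * v| ≤ t ^ (-b) * exp |x| * (|u - v| + |x| * |v|) :=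
        abs_rpow_mul_sub_rpow_mul_le ht _ _ _ _
    _ ≤ t ^ (-b) * exp (L * B) * (M * t + L * (t * |log t|) * |v|) := by gcongr
    _ = exp (L * B) * t ^ (1 - b) * (M + L * |v| * |log t|) := by
      rw [sub_eq_neg_add, rpow_add ht, rpow_one]; ring
    _ ≤ exp (L * B) * t ^ (1 - b) * ((M + L * |v|) * (1 + |log t|)) := by
      gcongr
      nlinarith [abs_nonneg (log t), mul_nonneg hL (abs_nonneg v)]
    _ = exp (L * B) * (M + L * |v|) * t ^ (1 - b) * (1 + |log t|) := by ring

theorem stmt_2_general (T : ℝ) (α : ℝ → ℝ)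
    (hα : ContDiff ℝ 2 α) :
    ∃ Q > 0, ∀ t ∈ Ioc (0:ℝ) T,
      |t ^ (-(α t)) / Real.Gamma (1 - α t) - t ^ (-(α 0)) / Real.Gamma (1 - α 0)|
        ≤ Q * t ^ (1 - α 0) * (1 + |Real.log t|) := by
  set G : ℝ → ℝ := fun s => (Gamma (1 - α s))⁻¹
  have hα1 : ContDiff ℝ 1 α := hα.of_le (by norm_num)
  obtain ⟨L, hL0, hL⟩ := hα1.exists_norm_sub_le_mul T
  have hG : ContDiff ℝ 1 G := contDiff_inv_Gamma.comp (contDiff_const.sub hα1)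
  obtain ⟨M, hM0, hM⟩ := hG.exists_norm_sub_le_mul T
  obtain ⟨B, hB⟩ := (isCompact_Icc (a := 0) (b := T)).exists_bound_of_continuousOn
    continuous_mul_log.continuousOn
  refine ⟨exp (L * B) * (M + L * |G 0|) + 1, by positivity, fun t ht => ?_⟩
  have ht0 : 0 < t := ht.1
  have htI : t ∈ Icc 0 T := Ioc_subset_Icc_self ht
  have htB : t * |log t| ≤ B := by simpa [abs_mul, abs_of_pos ht0] using hB t htI
  calc |t ^ (-(α t)) / Gamma (1 - α t) - t ^ (-(α 0)) / Gamma (1 - α 0)|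
      = |t ^ (-(α t)) * G t - t ^ (-(α 0)) * G 0| := rfl
    _ ≤ exp (L * B) * (M + L * |G 0|) * t ^ (1 - α 0) * (1 + |log t|) :=
      abs_rpow_neg_mul_sub_rpow_neg_mul_le ht0 (hL t htI) (hM t htI) htB
    _ ≤ (exp (L * B) * (M + L * |G 0|) + 1) * t ^ (1 - α 0) * (1 + |log t|) := by
      gcongr
      linarith

/-- Bound `|g̃(t)| ≤ Q t^{1-α₀}(1+|ln t|)` for the perturbation term
`g̃(t) = k(t) - t^{-α₀}/Γ(1-α₀)` with `k(t) = t^{-α(t)}/Γ(1-α(t))`. -/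
theorem stmt_2 (T : ℝ) (hT : 0 < T) (α : ℝ → ℝ)
    (hα : ContDiff ℝ 2 α)
    (hbd : ∃ M, ∀ z ∈ Icc (0:ℝ) T, |iteratedDeriv 2 α z| ≤ M)
    (hrange : ∀ z ∈ Icc (0:ℝ) T, α z ∈ Ioo (0:ℝ) 1) :
    ∃ Q > 0, ∀ t ∈ Ioc (0:ℝ) T,
      |t ^ (-(α t)) / Real.Gamma (1 - α t) - t ^ (-(α 0)) / Real.Gamma (1 - α 0)|
        ≤ Q * t ^ (1 - α 0) * (1 + |Real.log t|) :=
  stmt_2_general T α hα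
end

section
/- There exists a constant Q > 0 such that the derivative of the perturbation term g̃(t) = k(t) - t^{-α₀}/Γ(1-α₀) satisfies |g̃'(t)| ≤ Q t^{-α₀}(1 + |ln t|) for all t ∈ (0,T]. -/
/-!
Write `k(t) = F(t, α t)` with `F(t, a) = t ^ (-a) * G a` and `G a = 1 / Γ(1 - a)`, an entire
function. Then `g̃'(t) = α'(t) ∂ₐF(t, α t) - (ψ(α t) - ψ(α₀)) / t` with `ψ(a) = a t ^ (-a) G a`.
Both `∂ₐF` and `ψ'` are `O(t ^ (-a) (1 + |log t|))` for `a` in the compact range of `α`, and the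
increment of `ψ` is taken over an interval of length `|α t - α₀| = O(t)`, which cancels the `1 / t`.
Finally `t ^ (-a) ≤ exp (L C) t ^ (-α₀)` when `|a - α₀| ≤ L t`, since `t |log t| ≤ C` on `(0, T]`.
-/

open Set Real

theorem exists_mul_abs_log_le (T : ℝ) : ∃ C, ∀ t ∈ Ioc (0 : ℝ) T, t * |log t| ≤ C := by
  obtain ⟨C, hC⟩ := isCompact_Icc.exists_bound_of_continuousOn
    (continuous_mul_log.continuousOn (s := Icc 0 T))
  refine ⟨C, fun t ht => ?_⟩
  simpa only [norm_mul, norm_eq_abs, abs_of_pos ht.1] using hC t (Ioc_subset_Icc_self ht)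

theorem rpow_neg_le_exp_mul_rpow_neg {t a b L C : ℝ} (ht : 0 < t) (hL : 0 ≤ L)
    (hab : |a - b| ≤ L * t) (hC : t * |log t| ≤ C) :
    t ^ (-a) ≤ exp (L * C) * t ^ (-b) := by
  have key : log t * (b - a) ≤ L * C :=
    calc log t * (b - a) ≤ |log t| * |a - b| := by
          rw [abs_sub_comm, ← abs_mul]; exact le_abs_self _
      _ ≤ |log t| * (L * t) := by gcongr
      _ = L * (t * |log t|) := by ring
      _ ≤ L * C := by gcongr
  rw [rpow_def_of_pos ht, rpow_def_of_pos ht, ← exp_add, exp_le_exp]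
  linarith

section
variable {G : ℝ → ℝ} {t : ℝ}

theorem hasDerivAt_rpow_neg_mul_comp {β : ℝ → ℝ} {β' : ℝ} (hβ : HasDerivAt β β' t)
    (hG : DifferentiableAt ℝ G (β t)) (ht : 0 < t) :
    HasDerivAt (fun s => s ^ (-β s) * G (β s))
      (β' * (t ^ (-β t) * (deriv G (β t) - log t * G (β t))) - β t * t ^ (-β t) * G (β t) / t)
      t := by
  have hpow := (hasDerivAt_id' t).rpow hβ.fun_neg ht
  refine (hpow.fun_mul (hG.hasDerivAt.comp t hβ)).congr_deriv ?_
  rw [rpow_sub ht, rpow_one, Function.comp_apply]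
  field_simp
  ring

theorem hasDerivAt_mul_rpow_neg_mul {a : ℝ} (hG : DifferentiableAt ℝ G a) (ht : 0 < t) :
    HasDerivAt (fun b => b * t ^ (-b) * G b)
      (t ^ (-a) * G a + a * (t ^ (-a) * (deriv G a - log t * G a))) a := by
  have hpow := (hasDerivAt_const a t).rpow (hasDerivAt_id' a).fun_neg ht
  refine (((hasDerivAt_id' a).fun_mul hpow).fun_mul hG.hasDerivAt).congr_deriv ?_
  ring

theorem abs_rpow_neg_mul_deriv_sub_log_mul_le {a B : ℝ} (ht : 0 < t) (hG : |G a| ≤ B)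
    (hG' : |deriv G a| ≤ B) :
    |t ^ (-a) * (deriv G a - log t * G a)| ≤ B * t ^ (-a) * (1 + |log t|) := by
  have hpos : 0 < t ^ (-a) := rpow_pos_of_pos ht _
  rw [abs_mul, abs_of_pos hpos]
  have : |deriv G a - log t * G a| ≤ B * (1 + |log t|) :=
    calc |deriv G a - log t * G a| ≤ |deriv G a| + |log t| * |G a| := by
          rw [← abs_mul]; exact abs_sub _ _
      _ ≤ B + |log t| * B := by gcongr
      _ = B * (1 + |log t|) := by ring
  nlinarith

theorem abs_rpow_neg_mul_add_mul_le {a B : ℝ} (ht : 0 < t) (ha : |a| ≤ B) (hG : |G a| ≤ B)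
    (hG' : |deriv G a| ≤ B) :
    |t ^ (-a) * G a + a * (t ^ (-a) * (deriv G a - log t * G a))|
      ≤ (B + B ^ 2) * t ^ (-a) * (1 + |log t|) := by
  have hpos : 0 < t ^ (-a) := rpow_pos_of_pos ht _
  have hB : 0 ≤ B := (abs_nonneg _).trans ha
  have hlog : 0 ≤ |log t| := abs_nonneg _
  have h2 := abs_rpow_neg_mul_deriv_sub_log_mul_le ht hG hG'
  calc _ ≤ t ^ (-a) * |G a| + |a| * |t ^ (-a) * (deriv G a - log t * G a)| := by
        rw [← abs_of_pos hpos, ← abs_mul, ← abs_mul, abs_of_pos hpos]; exact abs_add_le _ _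
    _ ≤ t ^ (-a) * B + B * (B * t ^ (-a) * (1 + |log t|)) := by gcongr
    _ ≤ (B + B ^ 2) * t ^ (-a) * (1 + |log t|) := by nlinarith [mul_nonneg hB hpos.le]

theorem abs_deriv_rpow_neg_mul_sub_le {α : ℝ → ℝ} {L B E : ℝ} (ht : 0 < t)
    (hα : DifferentiableAt ℝ α t)
    (hG : ∀ a ∈ uIcc (α 0) (α t),
      DifferentiableAt ℝ G a ∧ |a| ≤ B ∧ |G a| ≤ B ∧ |deriv G a| ≤ B)
    (hα' : |deriv α t| ≤ L) (hαt : |α t - α 0| ≤ L * t)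
    (hpow : ∀ a ∈ uIcc (α 0) (α t), t ^ (-a) ≤ E * t ^ (-α 0)) :
    |deriv (fun s => s ^ (-α s) * G (α s) - s ^ (-α 0) * G (α 0)) t|
      ≤ L * E * (2 * B + B ^ 2) * t ^ (-α 0) * (1 + |log t|) := by
  set ψ : ℝ → ℝ := fun b => b * t ^ (-b) * G b
  have hderiv : deriv (fun s => s ^ (-α s) * G (α s) - s ^ (-α 0) * G (α 0)) t
      = deriv α t * (t ^ (-α t) * (deriv G (α t) - log t * G (α t)))
        - (ψ (α t) - ψ (α 0)) / t := by
    rw [((hasDerivAt_rpow_neg_mul_comp hα.hasDerivAt (hG _ right_mem_uIcc).1 ht).fun_sub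
      (hasDerivAt_rpow_neg_mul_comp (hasDerivAt_const t (α 0)) (hG _ left_mem_uIcc).1 ht)).deriv]
    ring
  have hL : 0 ≤ L := (abs_nonneg _).trans hα'
  have hB : 0 ≤ B := (abs_nonneg _).trans (hG _ left_mem_uIcc).2.1
  have hE : 0 ≤ E * t ^ (-α 0) := (rpow_pos_of_pos ht _).le.trans (hpow _ left_mem_uIcc)
  have hφ : |t ^ (-α t) * (deriv G (α t) - log t * G (α t))|
      ≤ B * (E * t ^ (-α 0)) * (1 + |log t|) := by
    obtain ⟨-, -, hGt, hG't⟩ := hG _ right_mem_uIcc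
    calc _ ≤ B * t ^ (-α t) * (1 + |log t|) := abs_rpow_neg_mul_deriv_sub_log_mul_le ht hGt hG't
      _ ≤ B * (E * t ^ (-α 0)) * (1 + |log t|) := by gcongr; exact hpow _ right_mem_uIcc
  have hψ : |ψ (α t) - ψ (α 0)| ≤ (B + B ^ 2) * (E * t ^ (-α 0)) * (1 + |log t|) * (L * t) := by
    have hψ' : ∀ a ∈ uIcc (α 0) (α t),
        ‖t ^ (-a) * G a + a * (t ^ (-a) * (deriv G a - log t * G a))‖
          ≤ (B + B ^ 2) * (E * t ^ (-α 0)) * (1 + |log t|) := fun a ha => by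
      obtain ⟨-, haB, hGa, hG'a⟩ := hG a ha
      calc _ ≤ (B + B ^ 2) * t ^ (-a) * (1 + |log t|) := abs_rpow_neg_mul_add_mul_le ht haB hGa hG'a
        _ ≤ _ := by gcongr; exact hpow a ha
    have := Convex.norm_image_sub_le_of_norm_hasDerivWithin_le
      (fun a ha => (hasDerivAt_mul_rpow_neg_mul (hG a ha).1 ht).hasDerivWithinAt) hψ'
      (convex_uIcc _ _) left_mem_uIcc right_mem_uIcc
    rw [norm_eq_abs, norm_eq_abs] at this
    exact this.trans (by gcongr)
  rw [hderiv]
  calc _ ≤ |deriv α t| * |t ^ (-α t) * (deriv G (α t) - log t * G (α t))|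
        + |ψ (α t) - ψ (α 0)| / t := by
        rw [← abs_mul, ← abs_of_pos ht, ← abs_div, abs_of_pos ht]; exact abs_sub _ _
    _ ≤ L * (B * (E * t ^ (-α 0)) * (1 + |log t|))
        + (B + B ^ 2) * (E * t ^ (-α 0)) * (1 + |log t|) * (L * t) / t := by gcongr
    _ = L * E * (2 * B + B ^ 2) * t ^ (-α 0) * (1 + |log t|) := by field_simp; ring

end

theorem exists_abs_deriv_rpow_neg_mul_sub_le {G α : ℝ → ℝ} (hG : ContDiff ℝ 1 G)
    (hα : ContDiff ℝ 1 α) (T : ℝ) :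
    ∃ Q > 0, ∀ t ∈ Ioc (0 : ℝ) T,
      |deriv (fun s => s ^ (-α s) * G (α s) - s ^ (-α 0) * G (α 0)) t|
        ≤ Q * t ^ (-α 0) * (1 + |log t|) := by
  set K := α '' Icc 0 T
  have hK : IsCompact K := isCompact_Icc.image hα.continuous
  obtain ⟨L₀, hL₀⟩ := isCompact_Icc.exists_bound_of_continuousOn (s := Icc 0 T)
    (hα.continuous_deriv le_rfl).continuousOn
  obtain ⟨B₁, hB₁⟩ := hK.exists_bound_of_continuousOn continuous_id.continuousOn
  obtain ⟨B₂, hB₂⟩ := hK.exists_bound_of_continuousOn hG.continuous.continuousOn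
  obtain ⟨B₃, hB₃⟩ := hK.exists_bound_of_continuousOn (hG.continuous_deriv le_rfl).continuousOn
  obtain ⟨C, hC⟩ := exists_mul_abs_log_le T
  set L := max L₀ 1
  set B := max (max B₁ B₂) (max B₃ 1)
  refine ⟨L * exp (L * C) * (2 * B + B ^ 2), by positivity, fun t ht => ?_⟩
  have hα' : ∀ z ∈ Icc 0 T, |deriv α z| ≤ L := fun z hz => (hL₀ z hz).trans (le_max_left _ _)
  have hαt : |α t - α 0| ≤ L * t := by
    have := Convex.norm_image_sub_le_of_norm_hasDerivWithin_le
      (fun z _ => ((hα.differentiable one_ne_zero) z).hasDerivAt.hasDerivWithinAt) hα'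
      (convex_Icc 0 T) (left_mem_Icc.2 (ht.1.le.trans ht.2)) (Ioc_subset_Icc_self ht)
    simpa only [norm_eq_abs, sub_zero, abs_of_pos ht.1] using this
  have hvals : uIcc (α 0) (α t) ⊆ K :=
    (intermediate_value_uIcc hα.continuous.continuousOn).trans
      (image_mono (by rw [uIcc_of_le ht.1.le]; exact Icc_subset_Icc le_rfl ht.2))
  refine abs_deriv_rpow_neg_mul_sub_le ht.1 (hα.differentiable one_ne_zero t) (fun a ha => ?_)
    (hα' t (Ioc_subset_Icc_self ht)) hαt (fun a ha => rpow_neg_le_exp_mul_rpow_neg ht.1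
      (by positivity) ((abs_sub_left_of_mem_uIcc ha).trans hαt) (hC t ht))
  have haK := hvals ha
  exact ⟨hG.differentiable one_ne_zero a, (hB₁ a haK).trans (by simp [B]),
    (hB₂ a haK).trans (by simp [B]), (hB₃ a haK).trans (by simp [B])⟩

theorem stmt_3_general (T : ℝ) (α : ℝ → ℝ)
    (hα : ContDiff ℝ 2 α) :
    ∃ Q > 0, ∀ t ∈ Ioc (0:ℝ) T,
      |deriv (fun s => s ^ (-(α s)) / Real.Gamma (1 - α s)
          - s ^ (-(α 0)) / Real.Gamma (1 - α 0)) t|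
        ≤ Q * t ^ (-(α 0)) * (1 + |Real.log t|) := by
  simp only [div_eq_mul_inv]
  exact exists_abs_deriv_rpow_neg_mul_sub_le (G := fun a => (Gamma (1 - a))⁻¹)
    (contDiff_inv_Gamma.comp (contDiff_const.sub contDiff_id)) (hα.of_le one_le_two) T

/-- Bound `|g̃'(t)| ≤ Q t^{-α₀}(1+|ln t|)` for the derivative of the
perturbation term `g̃(t) = k(t) - t^{-α₀}/Γ(1-α₀)`. -/
theorem stmt_3 (T : ℝ) (hT : 0 < T) (α : ℝ → ℝ)
    (hα : ContDiff ℝ 2 α)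
    (hbd : ∃ M, ∀ z ∈ Icc (0:ℝ) T, |iteratedDeriv 2 α z| ≤ M)
    (hrange : ∀ z ∈ Icc (0:ℝ) T, α z ∈ Ioo (0:ℝ) 1) :
    ∃ Q > 0, ∀ t ∈ Ioc (0:ℝ) T,
      |deriv (fun s => s ^ (-(α s)) / Real.Gamma (1 - α s)
          - s ^ (-(α 0)) / Real.Gamma (1 - α 0)) t|
        ≤ Q * t ^ (-(α 0)) * (1 + |Real.log t|) :=
  stmt_3_general T α hα
end

section
/- Let α₀ ∈ (0,1), λ > 0, and u₀ ∈ ℝ. The function u(t) = E_{2-α₀,1}(-λ t^{2-α₀}) u₀ solves u'(t) + λ ∫₀ᵗ (t-s)^{-α₀}/Γ(1-α₀) · u(s) ds = 0 for t ∈ (0,T] with u(0) = u₀. -/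
/-!
With `β = 2 - α₀` and `c = -λ`, expand `E_{β,1}(c t^β) = Σ c^k t^{βk} / Γ(βk+1)` and treat both
sides of the equation term by term. Differentiating gives `c t^{β-1} E_{β,β}(c t^β)`. Against the
kernel `(t-s)^{-α₀}`, the Beta integral turns `s^{βk}` into
`Γ(βk+1) Γ(1-α₀) / Γ(βk+2-α₀) · t^{βk+1-α₀}`, so the memory term is
`Γ(1-α₀) t^{1-α₀} E_{β,2-α₀}(c t^β)`. As `2 - α₀ = β`, the two agree. The interchanges of sum with
derivative and integral are justified by `Γ(βk+γ) ≥ k!`.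
-/

open MeasureTheory Set Real intervalIntegral

/-- Two-parameter Mittag-Leffler function `E_{β,γ}(z) = Σ_k z^k / Γ(βk+γ)`. -/
noncomputable def ML (β γ z : ℝ) : ℝ := ∑' k : ℕ, z ^ k / Real.Gamma (β * k + γ)

open scoped Nat

theorem factorial_le_Gamma {n : ℕ} {x : ℝ} (hn : 1 ≤ n) (hx : n + 1 ≤ x) :
    (n ! : ℝ) ≤ Gamma x := by
  have h2 : (2 : ℝ) ≤ n + 1 := by
    have : (1 : ℝ) ≤ n := by exact_mod_cast hn
    linarith
  rw [← Gamma_nat_eq_factorial]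
  exact Gamma_strictMonoOn_Ici.monotoneOn h2 (h2.trans hx) hx

theorem summable_pow_div_Gamma {β γ : ℝ} (hβ : 1 ≤ β) (hγ : 1 ≤ γ) (z : ℝ) :
    Summable fun k : ℕ => z ^ k / Gamma (β * k + γ) := by
  refine .of_norm_bounded_eventually_nat (Real.summable_pow_div_factorial |z|) ?_
  filter_upwards [Filter.eventually_ge_atTop 1] with k hk
  have hk' : (k : ℝ) ≤ β * k := le_mul_of_one_le_left k.cast_nonneg hβ
  rw [norm_div, norm_pow, Real.norm_eq_abs,
    Real.norm_of_nonneg (Gamma_pos_of_pos (by positivity)).le]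
  exact div_le_div_of_nonneg_left (by positivity) (by positivity)
    (factorial_le_Gamma hk (by linarith))

theorem ML_zero (β γ : ℝ) : ML β γ 0 = (Gamma γ)⁻¹ := by
  rw [ML, tsum_eq_single 0 fun k hk => by simp [zero_pow hk]]
  simp

theorem mul_rpow_pow {β c y : ℝ} (hy : 0 ≤ y) (n : ℕ) :
    (c * y ^ β) ^ n = c ^ n * y ^ (β * n) := by
  rw [mul_pow, ← rpow_natCast (y ^ β), ← rpow_mul hy]

theorem integral_rpow_mul_one_sub_rpow {a b : ℝ} (ha : 0 < a) (hb : 0 < b) :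
    ∫ x in (0:ℝ)..1, x ^ (a - 1) * (1 - x) ^ (b - 1) = Gamma a * Gamma b / Gamma (a + b) := by
  apply Complex.ofReal_injective
  push_cast [← Complex.Gamma_ofReal]
  rw [← Complex.betaIntegral_eq_Gamma_mul_div _ _ (by simpa) (by simpa), Complex.betaIntegral,
    ← intervalIntegral.integral_ofReal]
  refine intervalIntegral.integral_congr fun x hx => ?_
  rw [uIcc_of_le zero_le_one] at hx
  push_cast
  rw [Complex.ofReal_cpow hx.1, Complex.ofReal_cpow (by linarith [hx.2] : (0:ℝ) ≤ 1 - x)]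
  push_cast
  rfl

theorem integral_sub_rpow_mul_rpow {t p α : ℝ} (ht : 0 < t) (hp : -1 < p) (hα : α < 1) :
    ∫ s in (0:ℝ)..t, (t - s) ^ (-α) * s ^ p
      = Gamma (p + 1) * Gamma (1 - α) / Gamma (p + 2 - α) * t ^ (p + 1 - α) := by
  have hbeta :=
    integral_rpow_mul_one_sub_rpow (a := p + 1) (b := 1 - α) (by linarith) (by linarith)
  rw [show p + 1 + (1 - α) = p + 2 - α by ring] at hbeta
  have hsub :=
    smul_integral_comp_mul_left (f := fun s => (t - s) ^ (-α) * s ^ p) (a := 0) (b := 1) t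
  rw [mul_zero, mul_one] at hsub
  rw [← hsub, ← hbeta, smul_eq_mul, ← intervalIntegral.integral_const_mul,
    ← intervalIntegral.integral_mul_const]
  refine intervalIntegral.integral_congr fun x hx => ?_
  rw [uIcc_of_le zero_le_one] at hx
  rw [show t - t * x = t * (1 - x) by ring, mul_rpow ht.le (by linarith [hx.2]),
    mul_rpow ht.le hx.1, show p + 1 - α = 1 + (-α + p) by ring, rpow_add ht, rpow_add ht, rpow_one,
    show p + 1 - 1 = p by ring, show 1 - α - 1 = -α by ring]
  ring

theorem intervalIntegrable_sub_rpow_mul_rpow {t p α : ℝ} (hp : 0 ≤ p) (hα : α < 1) :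
    IntervalIntegrable (fun s => (t - s) ^ (-α) * s ^ p) volume 0 t := by
  have hkernel : IntervalIntegrable (fun s => (t - s) ^ (-α)) volume 0 t := by
    simpa using
      (intervalIntegrable_rpow' (a := t) (b := 0) (by linarith : -1 < -α)).comp_sub_left t
  exact hkernel.mul_continuousOn (continuous_rpow_const hp).continuousOn

theorem hasDerivAt_rpow_div_Gamma {p y : ℝ} (hp : p ≠ 0) (hy : y ≠ 0) :
    HasDerivAt (fun y => y ^ p / Gamma (p + 1)) (y ^ (p - 1) / Gamma p) y := by
  refine ((hasDerivAt_rpow_const (Or.inl hy)).div_const _).congr_deriv ?_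
  rw [Gamma_add_one hp, mul_div_mul_left _ _ hp]

theorem hasDerivAt_ML_mul_rpow {β c t : ℝ} (hβ : 1 ≤ β) (ht : 0 < t) :
    HasDerivAt (fun y => ML β 1 (c * y ^ β)) (c * t ^ (β - 1) * ML β β (c * t ^ β)) t := by
  set g : ℕ → ℝ → ℝ := fun j y => c ^ (j + 1) * (y ^ (β * (j + 1)) / Gamma (β * (j + 1) + 1))
  set g' : ℕ → ℝ → ℝ := fun j y => c ^ (j + 1) * (y ^ (β * (j + 1) - 1) / Gamma (β * (j + 1)))
  -- used at `a = c` to identify the limit and at `a = |c|`, `y = M` for the majorant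
  have hg' : ∀ a y : ℝ, 0 < y → ∀ j : ℕ, a ^ (j + 1) * (y ^ (β * (j + 1) - 1) / Gamma (β * (j + 1)))
      = a * y ^ (β - 1) * ((a * y ^ β) ^ j / Gamma (β * j + β)) := fun a y hy j => by
    rw [mul_rpow_pow hy.le, show β * (j + 1) - 1 = (β - 1) + β * j by ring, rpow_add hy,
      show β * (j + 1) = β * j + β by ring]
    ring
  have hg : ∀ y, 0 ≤ y → ∀ j : ℕ, (c * y ^ β) ^ (j + 1) / Gamma (β * ↑(j + 1) + 1) = g j y :=
    fun y hy j => by rw [mul_rpow_pow hy, mul_div_assoc]; push_cast; rfl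
  have hseries : ∀ y, 0 ≤ y → ML β 1 (c * y ^ β) = 1 + ∑' j, g j y := fun y hy => by
    rw [ML, (summable_pow_div_Gamma hβ le_rfl _).tsum_eq_zero_add, tsum_congr (hg y hy)]
    simp
  set M := t + 1
  have hderiv : ∀ j, ∀ y ∈ Ioo 0 M, HasDerivAt (g j) (g' j y) y := fun j y hy =>
    (hasDerivAt_rpow_div_Gamma (by positivity) hy.1.ne').const_mul _
  have hbound : ∀ j, ∀ y ∈ Ioo 0 M,
      ‖g' j y‖ ≤ |c| * M ^ (β - 1) * ((|c| * M ^ β) ^ j / Gamma (β * j + β)) := by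
    intro j y hy
    rw [← hg' |c| M (by positivity), Real.norm_eq_abs, abs_mul, abs_pow]
    have hexp : 0 ≤ β * (j + 1) - 1 := by nlinarith [(j.cast_nonneg : (0 : ℝ) ≤ j)]
    have hΓpos : 0 < Gamma (β * (j + 1)) := Gamma_pos_of_pos (by positivity)
    rw [abs_of_nonneg (div_nonneg (rpow_nonneg hy.1.le _) hΓpos.le)]
    gcongr
    · exact hy.1.le
    · exact hy.2.le
  have hg_summable : Summable fun j => g j t :=
    ((summable_nat_add_iff 1).mpr (summable_pow_div_Gamma hβ le_rfl _)).congr (hg t ht.le)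
  have htM : t ∈ Ioo 0 M := ⟨ht, lt_add_one t⟩
  have key := hasDerivAt_tsum_of_isPreconnected ((summable_pow_div_Gamma hβ hβ _).mul_left _)
    isOpen_Ioo (convex_Ioo 0 M).isPreconnected hderiv hbound htM hg_summable htM
  rw [tsum_congr (hg' c t ht), tsum_mul_left] at key
  exact (key.const_add 1).congr_of_eventuallyEq
    (Filter.eventually_of_mem (Ioi_mem_nhds ht) fun _ hy => hseries _ (le_of_lt hy))

theorem integral_sub_rpow_mul_ML_mul_rpow {α β c t : ℝ} (hα : α < 1) (hβ : 1 ≤ β) (ht : 0 < t) :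
    ∫ s in (0:ℝ)..t, (t - s) ^ (-α) * ML β 1 (c * s ^ β)
      = Gamma (1 - α) * t ^ (1 - α) * ML β (2 - α) (c * t ^ β) := by
  set F : ℝ → ℕ → ℝ → ℝ :=
    fun a k s => a ^ k / Gamma (β * k + 1) * ((t - s) ^ (-α) * s ^ (β * k))
  have hΓ : ∀ k : ℕ, 0 < Gamma (β * k + 1) := fun k => Gamma_pos_of_pos (by positivity)
  have hF_int : ∀ k, IntegrableOn (F c k) (Ioc 0 t) := fun k =>
    ((intervalIntegrable_iff_integrableOn_Ioc_of_le ht.le).mp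
      (intervalIntegrable_sub_rpow_mul_rpow (by positivity) hα)).const_mul _
  have hF_integral : ∀ a k, ∫ s in Ioc 0 t, F a k s
      = Gamma (1 - α) * t ^ (1 - α) * ((a * t ^ β) ^ k / Gamma (β * k + (2 - α))) := by
    intro a k
    rw [MeasureTheory.integral_const_mul, ← integral_of_le ht.le,
      integral_sub_rpow_mul_rpow ht (neg_one_lt_zero.trans_le (by positivity)) hα,
      mul_rpow_pow ht.le, show β * k + 1 - α = 1 - α + β * k by ring, rpow_add ht,
      show β * k + 2 - α = β * k + (2 - α) by ring]
    field_simp [(hΓ k).ne']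
  have hF_norm : ∀ k, ∀ s ∈ Ioc 0 t, ‖F c k s‖ = F |c| k s := by
    intro k s hs
    rw [Real.norm_eq_abs, abs_mul, abs_div, abs_pow, abs_of_pos (hΓ k),
      abs_of_nonneg (mul_nonneg (rpow_nonneg (by linarith [hs.2]) _) (rpow_nonneg hs.1.le _))]
  have hF_summable : Summable fun k => ∫ s in Ioc 0 t, ‖F c k s‖ := by
    simp_rw [setIntegral_congr_fun measurableSet_Ioc (hF_norm _), hF_integral]
    exact (summable_pow_div_Gamma hβ (by linarith) _).mul_left _
  have hseries : ∀ s ∈ Ioc 0 t, (t - s) ^ (-α) * ML β 1 (c * s ^ β) = ∑' k, F c k s := by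
    intro s hs
    rw [ML, ← tsum_mul_left]
    refine tsum_congr fun k => ?_
    rw [mul_rpow_pow hs.1.le]
    ring
  rw [integral_of_le ht.le, setIntegral_congr_fun measurableSet_Ioc hseries,
    ← integral_tsum_of_summable_integral_norm hF_int hF_summable]
  simp_rw [hF_integral, tsum_mul_left, ML]

theorem stmt_10_general (T α₀ lam u₀ : ℝ) (h1 : α₀ < 1) (u : ℝ → ℝ)
    (hu : ∀ t, u t = ML (2 - α₀) 1 (-(lam * t ^ (2 - α₀))) * u₀) :
    u 0 = u₀ ∧
      ∀ t ∈ Ioc (0:ℝ) T,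
        HasDerivAt u
          (-(lam * ∫ s in (0:ℝ)..t, (t - s) ^ (-α₀) / Real.Gamma (1 - α₀) * u s)) t := by
  have hβ : 1 ≤ 2 - α₀ := by linarith
  have hu' : u = fun t => ML (2 - α₀) 1 (-lam * t ^ (2 - α₀)) * u₀ := funext fun t => by
    rw [hu, neg_mul]
  refine ⟨?_, fun t ht => ?_⟩
  · rw [hu, zero_rpow (by linarith), mul_zero, neg_zero, ML_zero, Gamma_one, inv_one, one_mul]
  have hint : ∫ s in (0:ℝ)..t, (t - s) ^ (-α₀) / Gamma (1 - α₀) * u s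
      = (∫ s in (0:ℝ)..t, (t - s) ^ (-α₀) * ML (2 - α₀) 1 (-lam * s ^ (2 - α₀)))
        * (u₀ / Gamma (1 - α₀)) := by
    rw [← intervalIntegral.integral_mul_const]
    refine intervalIntegral.integral_congr fun s _ => ?_
    rw [hu, neg_mul]
    ring
  have hΓ : Gamma (1 - α₀) ≠ 0 := (Gamma_pos_of_pos (by linarith)).ne'
  rw [hint, integral_sub_rpow_mul_ML_mul_rpow h1 hβ ht.1, hu']
  refine ((hasDerivAt_ML_mul_rpow hβ ht.1).mul_const u₀).congr_deriv ?_
  rw [show 2 - α₀ - 1 = 1 - α₀ by ring]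
  field_simp

/-- `u(t) = E_{2-α₀,1}(-λ t^{2-α₀}) u₀` solves
`u' + λ ∫₀ᵗ (t-s)^{-α₀}/Γ(1-α₀) u(s) ds = 0` on `(0,T]` with `u(0) = u₀`. -/
theorem stmt_10 (T α₀ lam u₀ : ℝ) (hT : 0 < T) (h0 : 0 < α₀) (h1 : α₀ < 1)
    (hlam : 0 < lam) (u : ℝ → ℝ)
    (hu : ∀ t, u t = ML (2 - α₀) 1 (-(lam * t ^ (2 - α₀))) * u₀) :
    u 0 = u₀ ∧
      ∀ t ∈ Ioc (0:ℝ) T,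
        HasDerivAt u
          (-(lam * ∫ s in (0:ℝ)..t, (t - s) ^ (-α₀) / Real.Gamma (1 - α₀) * u s)) t :=
  stmt_10_general T α₀ lam u₀ h1 u hu
end
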